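/- arXiv:1604.00618 — 4 statements merged into one kernel-verified Lean document; each statement's English description precedes it below -/
import Mathlib

section
/- Let X and Y be Banach spaces. Suppose there exists a function η : (0,∞) → (0,∞) such that for every δ > 0, every finite family x₁*, …, xₙ* in the closed unit ball of X*, and every x₀ ∈ X with ‖x₀‖ = 1, there exist a bounded linear operator P : X → X with ‖P‖ = 1 and a bounded linear operator i : P(X) → X with ‖i‖ = 1 (where P(X) denotes the range of P with the norm inherited from X) such that: (1) ‖P* x_j* − x_j*‖ < δ for j = 1, …, n; (2) ‖i(P x₀) − x₀‖ < δ; (3) P(i(z)) = z for every z ∈ P(X); (4) the pair (P(X), Y) has the BPBp for compact operators with the function η. Then the pair (X, Y) has the BPBp for compact operators. -/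
open MeasureTheory

noncomputable section

/-- A pair `(X, Y)` of normed spaces has the Bishop–Phelps–Bollobás property for compact
operators with the function `η`. -/
def BPBpCompactWith (𝕜 : Type*) [RCLike 𝕜] (X Y : Type*) [NormedAddCommGroup X]
    [NormedSpace 𝕜 X] [NormedAddCommGroup Y] [NormedSpace 𝕜 Y] (η : ℝ → ℝ) : Prop :=
  ∀ ε : ℝ, 0 < ε → 0 < η ε ∧
    ∀ T : X →L[𝕜] Y, IsCompactOperator T → ‖T‖ = 1 →
      ∀ x₀ : X, ‖x₀‖ = 1 → 1 - η ε < ‖T x₀‖ →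
        ∃ S : X →L[𝕜] Y, ∃ x₁ : X, IsCompactOperator S ∧ ‖S‖ = 1 ∧ ‖x₁‖ = 1 ∧
          ‖S x₁‖ = 1 ∧ ‖x₀ - x₁‖ < ε ∧ ‖S - T‖ < ε

/-- A pair `(X, Y)` has the Bishop–Phelps–Bollobás property for compact operators. -/
def BPBpCompact (𝕜 : Type*) [RCLike 𝕜] (X Y : Type*) [NormedAddCommGroup X]
    [NormedSpace 𝕜 X] [NormedAddCommGroup Y] [NormedSpace 𝕜 Y] : Prop :=
  ∃ η : ℝ → ℝ, BPBpCompactWith 𝕜 X Y η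

/-!
Compactness of `T` makes `{g ∘ T : ‖g‖ ≤ 1}` totally bounded in `X*` (half of Schauder's
theorem), so it has a finite `δ`-net, and this net is what the hypothesis is fed. Each `g ∘ T` is
`δ`-close to a net point `xⱼ*`, which is `δ`-almost invariant under `P`, and `P ∘ (i ∘ P) = P`;
hence `‖T ∘ i ∘ P - T‖ ≤ 4δ`. So `T ∘ i` almost attains its norm on `P(X)` at `P x₀`; the BPBp of
`(P(X), Y)`, applied after normalising, gives `S₀` attaining its norm at some `u`, and then
`S₀ ∘ P` attains its norm at `i u`.
-/

open Metric
open scoped BoundedContinuousFunction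

theorem TotallyBounded.image_of_dist_le {α β γ : Type*} [PseudoMetricSpace β]
    [PseudoMetricSpace γ] {f : α → β} {Φ : α → γ} {s : Set α} (hΦ : TotallyBounded (Φ '' s))
    (hdist : ∀ a ∈ s, ∀ b ∈ s, dist (f a) (f b) ≤ dist (Φ a) (Φ b)) :
    TotallyBounded (f '' s) := by
  rw [Metric.totallyBounded_iff]
  intro ε hε
  obtain ⟨t, hts, htfin, hcover⟩ := finite_approx_of_totallyBounded hΦ ε hε
  choose a has hΦa using show ∀ c ∈ t, ∃ a ∈ s, Φ a = c from hts
  have : Finite t := htfin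
  refine ⟨Set.range fun c : t => f (a c c.2), Set.finite_range _, ?_⟩
  rintro _ ⟨x, hx, rfl⟩
  obtain ⟨c, hc, hxc⟩ := Set.mem_iUnion₂.1 (hcover (Set.mem_image_of_mem Φ hx))
  refine Set.mem_iUnion₂.2 ⟨f (a c hc), ⟨⟨c, hc⟩, rfl⟩, ?_⟩
  exact (hdist x hx (a c hc) (has c hc)).trans_lt (by rwa [hΦa c hc])

theorem TotallyBounded.exists_fin_net {α : Type*} [PseudoMetricSpace α] {A : Set α}
    (hA : TotallyBounded A) {δ : ℝ} (hδ : 0 < δ) :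
    ∃ (n : ℕ) (x : Fin n → α), (∀ j, x j ∈ A) ∧ ∀ a ∈ A, ∃ j, dist a (x j) < δ := by
  obtain ⟨s, hsA, hsfin, hcover⟩ := finite_approx_of_totallyBounded hA δ hδ
  obtain ⟨n, x, -, rfl⟩ := hsfin.fin_param
  refine ⟨n, x, fun j => hsA (Set.mem_range_self j), fun a ha => ?_⟩
  obtain ⟨_, ⟨j, rfl⟩, hj⟩ := Set.mem_iUnion₂.1 (hcover ha)
  exact ⟨j, hj⟩

section Operators

variable {𝕜 : Type*} [RCLike 𝕜] {X Y Z : Type*}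
  [NormedAddCommGroup X] [NormedSpace 𝕜 X] [NormedAddCommGroup Y] [NormedSpace 𝕜 Y]
  [NormedAddCommGroup Z] [NormedSpace 𝕜 Z]

open ContinuousLinearMap

theorem IsCompactOperator.totallyBounded_comp_closedBall {T : X →L[𝕜] Y}
    (hT : IsCompactOperator T) :
    TotallyBounded ((fun g : StrongDual 𝕜 Y => g.comp T) '' closedBall 0 1) := by
  set K := closure (T '' closedBall 0 1)
  have hK : IsCompact K := hT.isCompact_closure_image_closedBall 1
  have : CompactSpace K := isCompact_iff_compactSpace.1 hK
  obtain ⟨R, hR⟩ := hK.isBounded.subset_closedBall 0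
  let restrict : StrongDual 𝕜 Y → (K →ᵇ 𝕜) := fun g =>
    BoundedContinuousFunction.mkOfCompact ((g : C(Y, 𝕜)).restrict K)
  have hA : TotallyBounded (restrict '' closedBall 0 1) := by
    refine (BoundedContinuousFunction.arzela_ascoli (closedBall 0 R) (isCompact_closedBall 0 R)
      _ ?_ ?_).totallyBounded.subset subset_closure
    · rintro _ y ⟨g, hg, rfl⟩
      rw [mem_closedBall_zero_iff] at hg ⊢
      calc ‖g y‖ ≤ ‖g‖ * ‖(y : Y)‖ := g.le_opNorm y
        _ ≤ 1 * R := by gcongr; exact mem_closedBall_zero_iff.1 (hR y.2)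
        _ = R := one_mul R
    · refine (LipschitzWith.uniformEquicontinuous _ 1 ?_).equicontinuous
      rintro ⟨_, g, hg, rfl⟩
      have hg1 : ‖g‖₊ ≤ 1 := by simpa [← NNReal.coe_le_coe] using hg
      have hLip := (g.lipschitz.weaken hg1).comp (LipschitzWith.subtype_val K)
      rw [mul_one] at hLip
      exact hLip
  refine hA.image_of_dist_le fun g _ g' _ => ?_
  rw [dist_eq_norm, dist_eq_norm]
  refine ContinuousLinearMap.opNorm_le_of_unit_norm (norm_nonneg _) fun x hx => ?_
  have hTx : T x ∈ K := subset_closure ⟨x, by simp [hx], rfl⟩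
  exact (restrict g - restrict g').norm_coe_le_norm ⟨T x, hTx⟩

theorem ContinuousLinearMap.opNorm_le_of_forall_dual_comp {S : X →L[𝕜] Y} {M : ℝ} (hM : 0 ≤ M)
    (h : ∀ g : StrongDual 𝕜 Y, ‖g‖ ≤ 1 → ‖g.comp S‖ ≤ M) : ‖S‖ ≤ M := by
  refine S.opNorm_le_bound hM fun x => ?_
  obtain ⟨g, hg, hgx⟩ := exists_dual_vector'' 𝕜 (S x)
  calc ‖S x‖ = ‖g.comp S x‖ := by simp [hgx]
    _ ≤ ‖g.comp S‖ * ‖x‖ := le_opNorm _ _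
    _ ≤ M * ‖x‖ := by gcongr; exact h g hg

theorem ContinuousLinearMap.norm_comp_sub_self_le {P A : X →L[𝕜] X} (hPA : P.comp A = P)
    (ψ φ : X →L[𝕜] Z) : ‖ψ.comp A - ψ‖ ≤ (‖ψ - φ‖ + ‖φ.comp P - φ‖) * (‖A‖ + 1) := by
  have hsplit :
      ψ.comp A - ψ = (ψ - φ).comp A + (φ - ψ) + (φ - φ.comp P).comp A + (φ.comp P - φ) := by
    ext x
    have hx : P (A x) = P x := congr($hPA x)
    simp only [sub_apply, add_apply, comp_apply, hx]
    abel
  have hψA := (ψ - φ).opNorm_comp_le A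
  have hφA := (φ - φ.comp P).opNorm_comp_le A
  rw [norm_sub_rev φ (φ.comp P)] at hφA
  calc ‖ψ.comp A - ψ‖
      ≤ ‖(ψ - φ).comp A‖ + ‖φ - ψ‖ + ‖(φ - φ.comp P).comp A‖ + ‖φ.comp P - φ‖ := by
        rw [hsplit]; exact norm_add₄_le
    _ ≤ ‖ψ - φ‖ * ‖A‖ + ‖ψ - φ‖ + ‖φ.comp P - φ‖ * ‖A‖ + ‖φ.comp P - φ‖ := by
        rw [norm_sub_rev φ ψ]; gcongr
    _ = (‖ψ - φ‖ + ‖φ.comp P - φ‖) * (‖A‖ + 1) := by ring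

theorem ContinuousLinearMap.norm_comp_sub_self_le_of_net {T : X →L[𝕜] Y} {P A : X →L[𝕜] X}
    (hPA : P.comp A = P) (hA : ‖A‖ ≤ 1) {d : ℝ} {n : ℕ} {x' : Fin n → StrongDual 𝕜 X}
    (hnet : ∀ g : StrongDual 𝕜 Y, ‖g‖ ≤ 1 → ∃ j, ‖g.comp T - x' j‖ < d)
    (hP : ∀ j, ‖(x' j).comp P - x' j‖ < d) : ‖T.comp A - T‖ ≤ 4 * d := by
  have hd : 0 ≤ d := by
    obtain ⟨j, hj⟩ := hnet 0 (by simp)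
    exact (norm_nonneg _).trans hj.le
  refine opNorm_le_of_forall_dual_comp (by positivity) fun g hg => ?_
  obtain ⟨j, hj⟩ := hnet g hg
  calc ‖g.comp (T.comp A - T)‖ = ‖(g.comp T).comp A - g.comp T‖ := by
        rw [comp_sub, comp_assoc]
    _ ≤ (‖g.comp T - x' j‖ + ‖(x' j).comp P - x' j‖) * (‖A‖ + 1) :=
        norm_comp_sub_self_le hPA _ _
    _ ≤ (d + d) * (1 + 1) := by gcongr; exact (hP j).le
    _ = 4 * d := by ring

theorem norm_sub_inv_norm_smul {v : Z} (hv : v ≠ 0) :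
    ‖v - (‖v‖⁻¹ : 𝕜) • v‖ = |1 - ‖v‖| := by
  have hv' : 0 < ‖v‖ := norm_pos_iff.2 hv
  calc ‖v - (‖v‖⁻¹ : 𝕜) • v‖ = ‖(((1 - ‖v‖⁻¹ : ℝ)) : 𝕜) • v‖ := by
        rw [RCLike.ofReal_sub, RCLike.ofReal_one, RCLike.ofReal_inv, sub_smul, one_smul]
    _ = |1 - ‖v‖⁻¹| * ‖v‖ := by rw [norm_smul, RCLike.norm_ofReal]
    _ = |1 - ‖v‖| := by
        rw [← abs_of_pos hv', ← abs_mul, sub_mul, one_mul, abs_of_pos hv',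
          inv_mul_cancel₀ hv'.ne', abs_sub_comm]

theorem BPBpCompactWith.exists_near_of_norm_le {η : ℝ → ℝ} (hB : BPBpCompactWith 𝕜 X Y η)
    {ε : ℝ} (hε : 0 < ε) {T : X →L[𝕜] Y} (hT : IsCompactOperator T) (hTn : ‖T‖ ≤ 1) {x : X}
    (hx : ‖x‖ ≤ 1) (hTx : 1 - η ε < ‖T x‖) (hTx₀ : T x ≠ 0) :
    ∃ S : X →L[𝕜] Y, ∃ x₁ : X, IsCompactOperator S ∧ ‖S‖ = 1 ∧ ‖x₁‖ = 1 ∧ ‖S x₁‖ = 1 ∧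
      ‖x - x₁‖ < ε + (1 - ‖x‖) ∧ ‖S - T‖ < ε + (1 - ‖T‖) := by
  have hx₀ : x ≠ 0 := by rintro rfl; exact hTx₀ (map_zero T)
  have hT₀ : T ≠ 0 := by rintro rfl; exact hTx₀ rfl
  have hxpos : 0 < ‖x‖ := norm_pos_iff.2 hx₀
  have hTpos : 0 < ‖T‖ := norm_pos_iff.2 hT₀
  set T₁ := (‖T‖⁻¹ : 𝕜) • T
  set u := (‖x‖⁻¹ : 𝕜) • x
  have hT₁u : ‖T x‖ ≤ ‖T₁ u‖ := by
    have hscale : ‖T₁ u‖ = ‖x‖⁻¹ * (‖T‖⁻¹ * ‖T x‖) := by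
      simp only [T₁, u, smul_apply, map_smul, norm_smul, norm_inv, RCLike.norm_ofReal, abs_norm]
    rw [hscale]
    refine le_mul_of_one_le_left (by positivity) (one_le_inv₀ hxpos |>.2 hx) |>.trans' ?_
    exact le_mul_of_one_le_left (norm_nonneg _) (one_le_inv₀ hTpos |>.2 hTn)
  obtain ⟨S, x₁, hS, hSn, hx₁, hSx₁, hux₁, hST₁⟩ := (hB ε hε).2 T₁ (hT.smul _)
    (norm_smul_inv_norm hT₀) u (norm_smul_inv_norm hx₀) (hTx.trans_le hT₁u)
  refine ⟨S, x₁, hS, hSn, hx₁, hSx₁, ?_, ?_⟩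
  · calc ‖x - x₁‖ ≤ ‖x - u‖ + ‖u - x₁‖ := norm_sub_le_norm_sub_add_norm_sub _ _ _
      _ < (1 - ‖x‖) + ε := by
          rw [norm_sub_inv_norm_smul hx₀, abs_of_nonneg (by linarith)]; gcongr
      _ = ε + (1 - ‖x‖) := add_comm _ _
  · calc ‖S - T‖ ≤ ‖S - T₁‖ + ‖T₁ - T‖ := norm_sub_le_norm_sub_add_norm_sub _ _ _
      _ < ε + (1 - ‖T‖) := by
          rw [norm_sub_rev T₁, norm_sub_inv_norm_smul hT₀, abs_of_nonneg (by linarith)]; gcongr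

theorem ContinuousLinearMap.norm_comp_retraction_eq_one {Q : X →L[𝕜] Z} {i : Z →L[𝕜] X}
    (hQ : ‖Q‖ ≤ 1) (hi : ‖i‖ ≤ 1) (hQi : ∀ z, Q (i z) = z) {S : Z →L[𝕜] Y} (hS : ‖S‖ = 1)
    {u : Z} (hu : ‖u‖ = 1) (hSu : ‖S u‖ = 1) :
    ‖S.comp Q‖ = 1 ∧ ‖i u‖ = 1 ∧ ‖S.comp Q (i u)‖ = 1 := by
  have hSQiu : ‖S.comp Q (i u)‖ = 1 := by rw [comp_apply, hQi, hSu]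
  have hSQ : ‖S.comp Q‖ ≤ 1 := (opNorm_comp_le S Q).trans (by rw [hS, one_mul]; exact hQ)
  have hiu : ‖i u‖ ≤ 1 := (i.le_opNorm u).trans (by rw [hu, mul_one]; exact hi)
  have hbound : 1 ≤ ‖S.comp Q‖ * ‖i u‖ := hSQiu ▸ (S.comp Q).le_opNorm (i u)
  refine ⟨?_, ?_, hSQiu⟩ <;> nlinarith [norm_nonneg (S.comp Q), norm_nonneg (i u)]

theorem BPBpCompactWith.exists_near_of_retraction {η : ℝ → ℝ} (hB : BPBpCompactWith 𝕜 Z Y η)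
    {ε d : ℝ} (hε : 0 < ε) (hdη : 2 * d ≤ η ε) (hd : d < 1 / 2)
    {Q : X →L[𝕜] Z} {i : Z →L[𝕜] X} (hQ : ‖Q‖ ≤ 1) (hi : ‖i‖ ≤ 1) (hQi : ∀ z, Q (i z) = z)
    {T : X →L[𝕜] Y} (hT : IsCompactOperator T) (hTn : ‖T‖ ≤ 1)
    (hTiQ : ‖T.comp (i.comp Q) - T‖ ≤ 4 * d) {x₀ : X} (hx₀ : ‖x₀‖ ≤ 1)
    (hTx₀ : 1 - d < ‖T x₀‖) (hiQx₀ : ‖i (Q x₀) - x₀‖ < d) :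
    ∃ S : X →L[𝕜] Y, ∃ x₁ : X, IsCompactOperator S ∧ ‖S‖ = 1 ∧ ‖x₁‖ = 1 ∧ ‖S x₁‖ = 1 ∧
      ‖x₀ - x₁‖ < ε + 3 * d ∧ ‖S - T‖ < ε + 6 * d := by
  set Tᵢ := T.comp i
  have hTᵢ : ‖Tᵢ‖ ≤ 1 := (opNorm_comp_le T i).trans (by nlinarith [norm_nonneg T, norm_nonneg i])
  have hQx₀ : ‖Q x₀‖ ≤ 1 := (Q.le_opNorm x₀).trans (by nlinarith [norm_nonneg Q, norm_nonneg x₀])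
  have hTᵢQx₀ : 1 - 2 * d < ‖Tᵢ (Q x₀)‖ := by
    have hmove : ‖T x₀ - Tᵢ (Q x₀)‖ ≤ ‖x₀ - i (Q x₀)‖ := by
      rw [comp_apply, ← map_sub]
      exact (T.le_opNorm _).trans (by nlinarith [norm_nonneg (x₀ - i (Q x₀))])
    rw [norm_sub_rev x₀] at hmove
    linarith [norm_sub_norm_le (T x₀) (Tᵢ (Q x₀))]
  have hTᵢQ_le : ‖Tᵢ (Q x₀)‖ ≤ ‖Tᵢ‖ * ‖Q x₀‖ := Tᵢ.le_opNorm _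
  have hTᵢ_near : 1 - ‖Tᵢ‖ < 2 * d := by nlinarith [norm_nonneg Tᵢ]
  have hQx₀_near : 1 - ‖Q x₀‖ < 2 * d := by nlinarith [norm_nonneg (Q x₀)]
  obtain ⟨S₀, u, hS₀, hS₀n, hu, hS₀u, hQx₀u, hS₀Tᵢ⟩ := hB.exists_near_of_norm_le hε
    (hT.comp_clm i) hTᵢ hQx₀ (by linarith) (norm_pos_iff.1 (by linarith))
  obtain ⟨hSn, hiu, hSiu⟩ := norm_comp_retraction_eq_one hQ hi hQi hS₀n hu hS₀u
  refine ⟨S₀.comp Q, i u, hS₀.comp_clm Q, hSn, hiu, hSiu, ?_, ?_⟩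
  · have hiQu : ‖i (Q x₀ - u)‖ ≤ ‖Q x₀ - u‖ :=
      (i.le_opNorm _).trans (by nlinarith [norm_nonneg (Q x₀ - u)])
    calc ‖x₀ - i u‖ ≤ ‖x₀ - i (Q x₀)‖ + ‖i (Q x₀) - i u‖ :=
          norm_sub_le_norm_sub_add_norm_sub _ _ _
      _ < ε + 3 * d := by rw [norm_sub_rev, ← map_sub]; linarith
  · have hsplit : S₀.comp Q - T = (S₀ - Tᵢ).comp Q + (T.comp (i.comp Q) - T) := by
      rw [sub_comp, comp_assoc]; abel
    have hS₀TᵢQ : ‖(S₀ - Tᵢ).comp Q‖ ≤ ‖S₀ - Tᵢ‖ :=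
      (opNorm_comp_le _ Q).trans (by nlinarith [norm_nonneg (S₀ - Tᵢ)])
    calc ‖S₀.comp Q - T‖ ≤ ‖(S₀ - Tᵢ).comp Q‖ + ‖T.comp (i.comp Q) - T‖ := by
          rw [hsplit]; exact norm_add_le _ _
      _ < ε + 6 * d := by linarith

end Operators

theorem main_technical_lemma_general {𝕜 : Type*} [RCLike 𝕜] {X Y : Type*}
    [NormedAddCommGroup X] [NormedSpace 𝕜 X]
    [NormedAddCommGroup Y] [NormedSpace 𝕜 Y]
    (η : ℝ → ℝ) (hη : ∀ ε : ℝ, 0 < ε → 0 < η ε)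
    (h : ∀ δ : ℝ, 0 < δ → ∀ (n : ℕ) (x' : Fin n → StrongDual 𝕜 X),
      (∀ j, ‖x' j‖ ≤ 1) → ∀ x₀ : X, ‖x₀‖ = 1 →
        ∃ (P : X →L[𝕜] X) (i : ↥(LinearMap.range (P : X →ₗ[𝕜] X)) →L[𝕜] X),
          ‖P‖ = 1 ∧ ‖i‖ = 1 ∧
          (∀ j, ‖(x' j).comp P - x' j‖ < δ) ∧
          ‖i ⟨P x₀, ⟨x₀, rfl⟩⟩ - x₀‖ < δ ∧
          (∀ z : ↥(LinearMap.range (P : X →ₗ[𝕜] X)), P (i z) = (z : X)) ∧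
          BPBpCompactWith 𝕜 (↥(LinearMap.range (P : X →ₗ[𝕜] X))) Y η) :
    BPBpCompact 𝕜 X Y := by
  refine ⟨fun ε => min (min (η (ε / 3) / 2) (ε / 9)) (1 / 4), fun ε hε => ?_⟩
  set d := min (min (η (ε / 3) / 2) (ε / 9)) (1 / 4)
  have hd : 0 < d := by have := hη (ε / 3) (by positivity); positivity
  have hdη : d ≤ η (ε / 3) / 2 := (min_le_left _ _).trans (min_le_left _ _)
  have hdε : d ≤ ε / 9 := (min_le_left _ _).trans (min_le_right _ _)
  have hd4 : d ≤ 1 / 4 := min_le_right _ _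
  refine ⟨hd, fun T hT hTn x₀ hx₀ hTx₀ => ?_⟩
  obtain ⟨n, x', hx'T, hnet⟩ := hT.totallyBounded_comp_closedBall.exists_fin_net hd
  have hx'1 : ∀ j, ‖x' j‖ ≤ 1 := fun j => by
    obtain ⟨g, hg, hgj⟩ := hx'T j
    rw [← hgj]
    exact (g.opNorm_comp_le T).trans (by simpa [hTn] using hg)
  obtain ⟨P, i, hP, hi, hx'P, hiPx₀, hPi, hB⟩ := h d hd n x' hx'1 x₀ hx₀
  set Q := P.codRestrict (LinearMap.range (P : X →ₗ[𝕜] X)) (LinearMap.mem_range_self _)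
  have hQ : ‖Q‖ ≤ 1 := Q.opNorm_le_bound zero_le_one fun x =>
    (P.le_opNorm x).trans_eq (by rw [hP])
  have hQi : ∀ z, Q (i z) = z := fun z => Subtype.ext (hPi z)
  have hPiQ : P.comp (i.comp Q) = P := ContinuousLinearMap.ext fun x => hPi (Q x)
  have hiQ : ‖i.comp Q‖ ≤ 1 := (i.opNorm_comp_le Q).trans (by rw [hi, one_mul]; exact hQ)
  have hTiQ : ‖T.comp (i.comp Q) - T‖ ≤ 4 * d := T.norm_comp_sub_self_le_of_net hPiQ hiQ
    (fun g hg => by simpa only [dist_eq_norm] using hnet _ ⟨g, mem_closedBall_zero_iff.2 hg, rfl⟩)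
    hx'P
  obtain ⟨S, x₁, hS, hSn, hx₁, hSx₁, hx₀x₁, hST⟩ :=
    hB.exists_near_of_retraction (ε := ε / 3) (by positivity) (by linarith) (by linarith)
      hQ hi.le hQi hT hTn.le hTiQ hx₀.le hTx₀ hiPx₀
  exact ⟨S, x₁, hS, hSn, hx₁, hSx₁, by linarith, by linarith⟩

/-- Main technical lemma (Lemma 2.1). -/
theorem main_technical_lemma {𝕜 : Type*} [RCLike 𝕜] {X Y : Type*}
    [NormedAddCommGroup X] [NormedSpace 𝕜 X] [CompleteSpace X]
    [NormedAddCommGroup Y] [NormedSpace 𝕜 Y] [CompleteSpace Y]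
    (η : ℝ → ℝ) (hη : ∀ ε : ℝ, 0 < ε → 0 < η ε)
    (h : ∀ δ : ℝ, 0 < δ → ∀ (n : ℕ) (x' : Fin n → StrongDual 𝕜 X),
      (∀ j, ‖x' j‖ ≤ 1) → ∀ x₀ : X, ‖x₀‖ = 1 →
        ∃ (P : X →L[𝕜] X) (i : ↥(LinearMap.range (P : X →ₗ[𝕜] X)) →L[𝕜] X),
          ‖P‖ = 1 ∧ ‖i‖ = 1 ∧
          (∀ j, ‖(x' j).comp P - x' j‖ < δ) ∧
          ‖i ⟨P x₀, ⟨x₀, rfl⟩⟩ - x₀‖ < δ ∧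
          (∀ z : ↥(LinearMap.range (P : X →ₗ[𝕜] X)), P (i z) = (z : X)) ∧
          BPBpCompactWith 𝕜 (↥(LinearMap.range (P : X →ₗ[𝕜] X))) Y η) :
    BPBpCompact 𝕜 X Y :=
  main_technical_lemma_general η hη h
end
end

section
/- Let X be a Banach space for which there exist a nonempty directed preordered set Λ and a net (P_α)_{α∈Λ} of norm-one projections on X such that ‖P_α x − x‖ → 0 along Λ for every x ∈ X, and ‖P_α* x* − x*‖ → 0 along Λ for every x* ∈ X*. If for a Banach space Y there exists a function η : (0,∞) → (0,∞) such that all the pairs (P_α(X), Y), α ∈ Λ, have the BPBp for compact operators with the function η (where P_α(X) is the range of P_α with the norm inherited from X), then the pair (X, Y) has the BPBp for compact operators. -/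
open MeasureTheory

noncomputable section

/-!
For a compact `T`, the operators `T ∘ P α` converge to `T` in norm: the functionals `y' ∘ T`
with `‖y'‖ ≤ 1` form a totally bounded set (Schauder), and on it the `1`-Lipschitz maps
`x' ↦ x' ∘ P α` converge uniformly to the identity. Given `T` and `x₀` with `‖T x₀‖` close to `1`,
choose `α` with `P α x₀ ≈ x₀` and `T ∘ P α ≈ T`. Normalising the restriction of `T` to the range
of `P α` and the vector `P α x₀`, the BPBp of `(range (P α), Y)` gives `S₁` attaining its norm at
some `x₁` in the range, and `S₁ ∘ P α` together with `x₁` is the required pair on `X`.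
-/

open Filter Metric Set Topology
open scoped NNReal

theorem TotallyBounded.tendstoUniformlyOn_of_lipschitzWith {ι α β : Type*}
    [PseudoMetricSpace α] [PseudoMetricSpace β] {l : Filter ι} {F : ι → α → β} {f : α → β}
    {K : ℝ≥0} (hF : ∀ i, LipschitzWith K (F i)) (hf : LipschitzWith K f)
    (hFf : ∀ x, Tendsto (fun i => F i x) l (𝓝 (f x))) {s : Set α} (hs : TotallyBounded s) :
    TendstoUniformlyOn F f l s := by
  rw [Metric.tendstoUniformlyOn_iff]
  intro ε hε
  have hr : 0 < ε / (3 * (K + 1)) := by positivity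
  have hKr : K * (ε / (3 * (K + 1))) < ε / 3 := by
    rw [mul_div_assoc', div_lt_div_iff₀ (by positivity) (by positivity)]
    nlinarith
  obtain ⟨t, ht, hst⟩ := Metric.totallyBounded_iff.1 hs _ hr
  have hnet : ∀ᶠ i in l, ∀ y ∈ t, dist (F i y) (f y) < ε / 3 :=
    (eventually_all_finite ht).2 fun y _ => Metric.tendsto_nhds.1 (hFf y) _ (by positivity)
  filter_upwards [hnet] with i hi x hx
  obtain ⟨y, hy, hxy⟩ := mem_iUnion₂.1 (hst hx)
  rw [mem_ball] at hxy
  calc dist (f x) (F i x) ≤ dist (f x) (f y) + dist (f y) (F i y) + dist (F i y) (F i x) :=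
        dist_triangle4 _ _ _ _
    _ ≤ K * dist x y + dist (F i y) (f y) + K * dist y x := by
        rw [dist_comm (f y)]
        gcongr
        exacts [hf.dist_le_mul x y, (hF i).dist_le_mul y x]
    _ < ε / 3 + ε / 3 + ε / 3 := by
        rw [dist_comm y x]
        gcongr
        · exact (mul_le_mul_of_nonneg_left hxy.le K.2).trans_lt hKr
        · exact hi y hy
        · exact (mul_le_mul_of_nonneg_left hxy.le K.2).trans_lt hKr
    _ = ε := by ring

section

variable {𝕜 E F : Type*} [RCLike 𝕜] [NormedAddCommGroup E] [NormedSpace 𝕜 E]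
  [NormedAddCommGroup F] [NormedSpace 𝕜 F]

theorem IsCompactOperator.totallyBounded_image_dual_closedBall {T : E →L[𝕜] F}
    (hT : IsCompactOperator T) :
    TotallyBounded ((fun y' : StrongDual 𝕜 F => y'.comp T) '' closedBall 0 1) := by
  rw [Metric.totallyBounded_iff]
  intro ε hε
  obtain ⟨s, hs, hTs⟩ := Metric.totallyBounded_iff.1
    ((hT.isCompact_closure_image_closedBall 1).totallyBounded.subset subset_closure) (ε / 4)
    (by positivity)
  have := hs.fintype
  let restrict : StrongDual 𝕜 F → s → 𝕜 := fun y' z => y' z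
  have hbdd : TotallyBounded (restrict '' closedBall 0 1) := by
    refine (Bornology.IsBounded.isCompact_closure ?_).totallyBounded.subset subset_closure
    rw [← Bornology.forall_isBounded_image_eval_iff]
    intro z
    refine isBounded_iff_forall_norm_le.2 ⟨‖(z : F)‖, ?_⟩
    rintro _ ⟨_, ⟨y', hy', rfl⟩, rfl⟩
    simpa using y'.le_of_opNorm_le (mem_closedBall_zero_iff.1 hy') z
  obtain ⟨t, htB, ht, hcover⟩ := exists_subset_image_finite_and.1
    (finite_approx_of_totallyBounded hbdd (ε / 4) (by positivity))
  refine ⟨(fun y' : StrongDual 𝕜 F => y'.comp T) '' t, ht.image _, ?_⟩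
  rintro _ ⟨y', hy', rfl⟩
  obtain ⟨_, ⟨b, hb, rfl⟩, hyb⟩ := mem_iUnion₂.1 (hcover ⟨y', hy', rfl⟩)
  refine mem_iUnion₂.2 ⟨b.comp T, mem_image_of_mem _ hb, ?_⟩
  rw [mem_ball, dist_eq_norm]
  refine lt_of_le_of_lt (ContinuousLinearMap.opNorm_le_of_unit_norm (by positivity)
    fun x hx => ?_) (by linarith : 3 * (ε / 4) < ε)
  obtain ⟨z, hz, hxz⟩ := mem_iUnion₂.1 (hTs ⟨x, by simp [hx], rfl⟩)
  have hdiff : ‖y' - b‖ ≤ 2 := by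
    have := mem_closedBall_zero_iff.1 hy'
    have := mem_closedBall_zero_iff.1 (htB hb)
    linarith [norm_sub_le y' b]
  have hyz : ‖(y' - b) z‖ ≤ ε / 4 := by
    rw [sub_apply, ← dist_eq_norm]
    exact (dist_le_pi_dist (restrict y') (restrict b) ⟨z, hz⟩).trans (mem_ball.1 hyb).le
  calc ‖(y' - b) (T x)‖ = ‖(y' - b) (T x - z) + (y' - b) z‖ := by rw [map_sub, sub_add_cancel]
    _ ≤ ‖y' - b‖ * ‖T x - z‖ + ‖(y' - b) z‖ := norm_add_le_of_le ((y' - b).le_opNorm _) le_rfl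
    _ ≤ 2 * (ε / 4) + ε / 4 := by
        gcongr
        exact (mem_ball_iff_norm.1 hxz).le
    _ = 3 * (ε / 4) := by ring

theorem IsCompactOperator.tendsto_comp_of_tendsto_dual_comp {ι : Type*} {l : Filter ι}
    {P : ι → E →L[𝕜] E} (hP : ∀ i, ‖P i‖ ≤ 1)
    (hP' : ∀ x' : StrongDual 𝕜 E, Tendsto (fun i => x'.comp (P i)) l (𝓝 x'))
    {T : E →L[𝕜] F} (hT : IsCompactOperator T) :
    Tendsto (fun i => T.comp (P i)) l (𝓝 T) := by
  have hlip : ∀ i, LipschitzWith 1 fun x' : StrongDual 𝕜 E => x'.comp (P i) := fun i =>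
    LipschitzWith.of_dist_le_mul fun x' y' => by
      simpa [dist_eq_norm, ← ContinuousLinearMap.sub_comp] using
        (x' - y').opNorm_comp_le (P i) |>.trans (mul_le_of_le_one_right (norm_nonneg _) (hP i))
  have hunif := Metric.tendstoUniformlyOn_iff.1 <|
    hT.totallyBounded_image_dual_closedBall.tendstoUniformlyOn_of_lipschitzWith hlip
      LipschitzWith.id hP'
  refine Metric.tendsto_nhds.2 fun ε hε => ?_
  filter_upwards [hunif (ε / 2) (half_pos hε)] with i hi
  rw [dist_eq_norm]
  refine lt_of_le_of_lt (ContinuousLinearMap.opNorm_le_of_unit_norm (half_pos hε).le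
    fun x hx => ?_) (half_lt_self hε)
  obtain ⟨g, hg, hgx⟩ := exists_dual_vector'' 𝕜 ((T.comp (P i) - T) x)
  have := hi (g.comp T) ⟨g, mem_closedBall_zero_iff.2 hg, rfl⟩
  rw [dist_comm, dist_eq_norm] at this
  calc ‖(T.comp (P i) - T) x‖ = ‖g ((T.comp (P i) - T) x)‖ := by rw [hgx]; simp
    _ = ‖((g.comp T).comp (P i) - g.comp T) x‖ := by simp
    _ ≤ ‖(g.comp T).comp (P i) - g.comp T‖ := by
        simpa [hx] using ((g.comp T).comp (P i) - g.comp T).le_opNorm x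
    _ ≤ ε / 2 := this.le

end

theorem norm_inv_norm_smul_sub_self {𝕜 E : Type*} [RCLike 𝕜] [NormedAddCommGroup E]
    [NormedSpace 𝕜 E] {x : E} (hx : x ≠ 0) : ‖(‖x‖⁻¹ : 𝕜) • x - x‖ = |1 - ‖x‖| := by
  have hx' : ‖x‖ ≠ 0 := norm_ne_zero_iff.2 hx
  have hsmul : (‖x‖⁻¹ : 𝕜) • x - x = ((‖x‖⁻¹ - 1 : ℝ) : 𝕜) • x := by
    push_cast
    rw [sub_smul, one_smul]
  rw [hsmul, norm_smul, RCLike.norm_ofReal, ← abs_norm x, ← abs_mul, abs_norm, sub_mul,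
    inv_mul_cancel₀ hx', one_mul, abs_sub_comm]

section

variable {𝕜 X Y : Type*} [RCLike 𝕜] [NormedAddCommGroup X] [NormedSpace 𝕜 X]
  [NormedAddCommGroup Y] [NormedSpace 𝕜 Y] {η : ℝ → ℝ}

theorem BPBpCompactWith.exists_near_of_norm_le_one (h : BPBpCompactWith 𝕜 X Y η) {ε : ℝ}
    (hε : 0 < ε) {T : X →L[𝕜] Y} (hT : IsCompactOperator T) (hTn : ‖T‖ ≤ 1) {x₀ : X}
    (hx₀ : ‖x₀‖ ≤ 1) (hTx₀ : 0 < ‖T x₀‖) (hη : 1 - η ε < ‖T x₀‖) :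
    ∃ S : X →L[𝕜] Y, ∃ x₁ : X, IsCompactOperator S ∧ ‖S‖ = 1 ∧ ‖x₁‖ = 1 ∧ ‖S x₁‖ = 1 ∧
      ‖x₀ - x₁‖ < ε + (1 - ‖x₀‖) ∧ ‖S - T‖ < ε + (1 - ‖T‖) := by
  have hx₀0 : x₀ ≠ 0 := by rintro rfl; simp at hTx₀
  have hT0 : T ≠ 0 := by rintro rfl; simp at hTx₀
  set u : X := (‖x₀‖⁻¹ : 𝕜) • x₀
  set T' : X →L[𝕜] Y := (‖T‖⁻¹ : 𝕜) • T
  have hu : ‖u - x₀‖ = 1 - ‖x₀‖ := by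
    rw [norm_inv_norm_smul_sub_self hx₀0, abs_of_nonneg (by linarith)]
  have hT' : ‖T' - T‖ = 1 - ‖T‖ := by
    rw [norm_inv_norm_smul_sub_self hT0, abs_of_nonneg (by linarith)]
  have hT'u : ‖T x₀‖ ≤ ‖T' u‖ := by
    rw [smul_apply, map_smul, norm_smul, norm_smul, norm_inv, norm_inv, RCLike.norm_ofReal,
      RCLike.norm_ofReal, abs_norm, abs_norm, ← mul_assoc, ← mul_inv, inv_mul_eq_div]
    exact le_div_self (norm_nonneg _) (by positivity) (mul_le_one₀ hTn (norm_nonneg _) hx₀)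
  obtain ⟨S, x₁, hS, hSn, hx₁, hSx₁, hux₁, hST'⟩ := (h ε hε).2 T' (hT.smul _)
    (norm_smul_inv_norm hT0) u (norm_smul_inv_norm hx₀0) (hη.trans_le hT'u)
  refine ⟨S, x₁, hS, hSn, hx₁, hSx₁, ?_, ?_⟩
  · linarith [norm_sub_le_norm_sub_add_norm_sub x₀ u x₁, norm_sub_rev x₀ u]
  · linarith [norm_sub_le_norm_sub_add_norm_sub S T' T]

theorem BPBpCompactWith.exists_near_of_range_projection {P : X →L[𝕜] X}
    (hP : ∀ x, P (P x) = P x) (hPn : ‖P‖ ≤ 1)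
    (h : BPBpCompactWith 𝕜 (LinearMap.range (P : X →ₗ[𝕜] X)) Y η) {ε θ : ℝ} (hε : 0 < ε)
    (hθη : 2 * θ ≤ η ε) (hθ : 2 * θ < 1) {T : X →L[𝕜] Y} (hT : IsCompactOperator T)
    (hTn : ‖T‖ ≤ 1) {x₀ : X} (hx₀ : ‖x₀‖ = 1) (hTx₀ : 1 - θ < ‖T x₀‖)
    (hPx₀ : ‖P x₀ - x₀‖ < θ) (hTP : ‖T.comp P - T‖ < θ) :
    ∃ S : X →L[𝕜] Y, ∃ x₁ : X, IsCompactOperator S ∧ ‖S‖ = 1 ∧ ‖x₁‖ = 1 ∧ ‖S x₁‖ = 1 ∧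
      ‖x₀ - x₁‖ < ε + 2 * θ ∧ ‖S - T‖ < ε + 3 * θ := by
  set Z := LinearMap.range (P : X →ₗ[𝕜] X)
  let Q : X →L[𝕜] Z := P.codRestrict Z fun x => LinearMap.mem_range_self _ x
  let T₁ : Z →L[𝕜] Y := T.comp Z.subtypeL
  have hQn : ‖Q‖ ≤ 1 := Q.opNorm_le_bound zero_le_one fun x => P.le_of_opNorm_le hPn x
  have hQv : ∀ v : Z, Q v = v := by
    rintro ⟨_, x, rfl⟩
    exact Subtype.ext (hP x)
  have hT₁n : ‖T₁‖ ≤ 1 :=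
    (T.opNorm_comp_le _).trans (mul_le_one₀ hTn (norm_nonneg _) (Submodule.norm_subtypeL_le Z))
  have hQx₀ : ‖Q x₀‖ ≤ 1 := (Q.le_of_opNorm_le hQn x₀).trans_eq (by rw [hx₀, one_mul])
  have hQx₀' : 1 - θ < ‖Q x₀‖ := by
    change 1 - θ < ‖P x₀‖
    linarith [norm_sub_norm_le x₀ (P x₀), norm_sub_rev x₀ (P x₀)]
  have hT₁x₀ : 1 - 2 * θ < ‖T₁ (Q x₀)‖ := by
    have hTPx₀ : ‖T (P x₀) - T x₀‖ ≤ ‖T.comp P - T‖ := by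
      simpa [hx₀] using (T.comp P - T).le_opNorm x₀
    change 1 - 2 * θ < ‖T (P x₀)‖
    linarith [norm_sub_norm_le (T x₀) (T (P x₀)), norm_sub_rev (T x₀) (T (P x₀))]
  have hT₁ : ‖T₁ (Q x₀)‖ ≤ ‖T₁‖ := T₁.le_of_opNorm_le_of_le le_rfl hQx₀ |>.trans_eq (mul_one _)
  obtain ⟨S₁, v, hS₁, hS₁n, hv, hS₁v, hQx₀v, hS₁T₁⟩ :=
    h.exists_near_of_norm_le_one hε (hT.comp_clm _) hT₁n hQx₀ (by linarith) (by linarith)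
  have hSv : ‖S₁.comp Q v‖ = 1 := by simpa [hQv] using hS₁v
  have hSn : ‖S₁.comp Q‖ ≤ 1 := (S₁.opNorm_comp_le Q).trans (by rwa [hS₁n, one_mul])
  have hST : S₁.comp Q - T = (S₁ - T₁).comp Q + (T.comp P - T) := by
    rw [ContinuousLinearMap.sub_comp, show T₁.comp Q = T.comp P from rfl, sub_add_sub_cancel]
  refine ⟨S₁.comp Q, v, hS₁.comp_clm Q, ?_, hv, hSv, ?_, ?_⟩
  · refine le_antisymm hSn ?_
    have := (S₁.comp Q).le_opNorm v
    rwa [hSv, show ‖(v : X)‖ = 1 from hv, mul_one] at this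
  · have hPx₀v : ‖P x₀ - v‖ = ‖Q x₀ - v‖ := rfl
    linarith [norm_sub_le_norm_sub_add_norm_sub x₀ (P x₀) v, norm_sub_rev x₀ (P x₀)]
  · have := (S₁ - T₁).opNorm_comp_le Q
    have := mul_le_of_le_one_right (norm_nonneg (S₁ - T₁)) hQn
    rw [hST]
    linarith [norm_add_le ((S₁ - T₁).comp Q) (T.comp P - T)]

end

theorem bpbp_compact_of_net_of_projections_general {𝕜 : Type*} [RCLike 𝕜] {X Y : Type*}
    [NormedAddCommGroup X] [NormedSpace 𝕜 X]
    [NormedAddCommGroup Y] [NormedSpace 𝕜 Y]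
    {Λ : Type*} [Preorder Λ] [IsDirected Λ (· ≤ ·)] [Nonempty Λ]
    (P : Λ → X →L[𝕜] X)
    (hproj : ∀ α, ∀ x : X, P α (P α x) = P α x)
    (hnorm : ∀ α, ‖P α‖ = 1)
    (hconv : ∀ x : X, ∀ ε : ℝ, 0 < ε → ∃ α₀ : Λ, ∀ α, α₀ ≤ α → ‖P α x - x‖ < ε)
    (hconv' : ∀ x' : StrongDual 𝕜 X, ∀ ε : ℝ, 0 < ε →
      ∃ α₀ : Λ, ∀ α, α₀ ≤ α → ‖x'.comp (P α) - x'‖ < ε)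
    (η : ℝ → ℝ)
    (hBPB : ∀ α, BPBpCompactWith 𝕜 (↥(LinearMap.range (P α : X →ₗ[𝕜] X))) Y η) :
    BPBpCompact 𝕜 X Y := by
  refine ⟨fun ε => min (η (ε / 4)) (min ε 1) / 4, fun ε hε => ?_⟩
  have hη : 0 < η (ε / 4) := (hBPB (Classical.arbitrary Λ) _ (by positivity)).1
  dsimp only
  set θ := min (η (ε / 4)) (min ε 1) / 4 with hθ
  have hθη := min_le_left (η (ε / 4)) (min ε 1)
  have hθε := (min_le_right (η (ε / 4)) (min ε 1)).trans (min_le_left ε 1)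
  have hθ1 := (min_le_right (η (ε / 4)) (min ε 1)).trans (min_le_right ε 1)
  refine ⟨by positivity, fun T hT hTn x₀ hx₀ hTx₀ => ?_⟩
  have hTP : Tendsto (fun α => T.comp (P α)) atTop (𝓝 T) :=
    hT.tendsto_comp_of_tendsto_dual_comp (fun α => (hnorm α).le) fun x' =>
      Metric.tendsto_nhds.2 fun δ hδ => eventually_atTop.2 <| by
        simpa only [dist_eq_norm] using hconv' x' δ hδ
  obtain ⟨α, hPx₀, hTPα⟩ := ((eventually_atTop.2 (hconv x₀ θ (by positivity))).and
    (Metric.tendsto_nhds.1 hTP θ (by positivity))).exists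
  obtain ⟨S, x₁, hS, hSn, hx₁, hSx₁, hx₀x₁, hST⟩ :=
    (hBPB α).exists_near_of_range_projection (hproj α) (hnorm α).le
      (by positivity : 0 < ε / 4) (by linarith) (by linarith) hT hTn.le hx₀ hTx₀ hPx₀
      (by rwa [← dist_eq_norm])
  exact ⟨S, x₁, hS, hSn, hx₁, hSx₁, by linarith, by linarith⟩

/-- Proposition 2.2: a net of norm-one projections converging pointwise to the identity,
whose adjoints converge pointwise to the identity as well, transfers the BPBp for compact
operators from the ranges to the whole space. -/
theorem bpbp_compact_of_net_of_projections {𝕜 : Type*} [RCLike 𝕜] {X Y : Type*}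
    [NormedAddCommGroup X] [NormedSpace 𝕜 X] [CompleteSpace X]
    [NormedAddCommGroup Y] [NormedSpace 𝕜 Y] [CompleteSpace Y]
    {Λ : Type*} [Preorder Λ] [IsDirected Λ (· ≤ ·)] [Nonempty Λ]
    (P : Λ → X →L[𝕜] X)
    (hproj : ∀ α, ∀ x : X, P α (P α x) = P α x)
    (hnorm : ∀ α, ‖P α‖ = 1)
    (hconv : ∀ x : X, ∀ ε : ℝ, 0 < ε → ∃ α₀ : Λ, ∀ α, α₀ ≤ α → ‖P α x - x‖ < ε)
    (hconv' : ∀ x' : StrongDual 𝕜 X, ∀ ε : ℝ, 0 < ε →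
      ∃ α₀ : Λ, ∀ α, α₀ ≤ α → ‖x'.comp (P α) - x'‖ < ε)
    (η : ℝ → ℝ)
    (hBPB : ∀ α, BPBpCompactWith 𝕜 (↥(LinearMap.range (P α : X →ₗ[𝕜] X))) Y η) :
    BPBpCompact 𝕜 X Y :=
  bpbp_compact_of_net_of_projections_general P hproj hnorm hconv hconv' η hBPB
end
end

section
/- Let X and Y be Banach spaces. Suppose there exist a nonempty directed preordered set Λ and a net (Q_λ)_{λ∈Λ} of norm-one projections on Y such that ‖Q_λ y − y‖ → 0 along Λ for every y ∈ Y. If there is a function η : (0,∞) → (0,∞) such that all the pairs (X, Q_λ(Y)), λ ∈ Λ, have the BPBp for compact operators with the function η (where Q_λ(Y) is the range of Q_λ with the norm inherited from Y), then the pair (X, Y) has the BPBp for compact operators. -/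
/-!
For a compact `T`, the contractions `Q_λ` converge to the identity uniformly on the relatively
compact set `T(B_X)`, so `‖Q_λ T - T‖ → 0`. Normalizing `Q_λ T` moves it by at most
`‖Q_λ T - T‖` more, and gives a norm-one compact operator into `Q_λ(Y)`, which is closed as the
range of a continuous projection. The BPBp of `(X, Q_λ(Y))` with `ε / 2` then produces `S` and
`x₁`, and the remaining `ε / 2` absorbs the distance from the normalized `Q_λ T` to `T`.
-/

open MeasureTheory

noncomputable section

open Filter Topology

section

variable {𝕜 : Type*} [RCLike 𝕜] {X Y : Type*} [NormedAddCommGroup X] [NormedSpace 𝕜 X]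
  [NormedAddCommGroup Y] [NormedSpace 𝕜 Y]

theorem norm_inv_norm_smul_sub_le {a t : Y} (ht : ‖t‖ = 1) :
    ‖(‖a‖⁻¹ : 𝕜) • a - t‖ ≤ 2 * ‖a - t‖ := by
  rcases eq_or_ne a 0 with rfl | ha
  · simp [ht]
  have hnormalize : ‖(‖a‖⁻¹ : 𝕜) • a - a‖ ≤ ‖a - t‖ := by
    have ha' : 0 < ‖a‖ := norm_pos_iff.2 ha
    calc ‖(‖a‖⁻¹ : 𝕜) • a - a‖ = ‖((‖a‖⁻¹ - 1 : ℝ) : 𝕜) • a‖ := by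
          rw [RCLike.ofReal_sub, RCLike.ofReal_one, sub_smul, one_smul, RCLike.ofReal_inv]
      _ = |‖t‖ - ‖a‖| := by
          rw [norm_smul, RCLike.norm_ofReal, ← abs_of_pos ha', ← abs_mul, abs_of_pos ha', sub_mul,
            inv_mul_cancel₀ ha'.ne', one_mul, ht, abs_sub_comm]
      _ ≤ ‖a - t‖ := by rw [norm_sub_rev a]; exact abs_norm_sub_norm_le t a
  calc ‖(‖a‖⁻¹ : 𝕜) • a - t‖ ≤ ‖(‖a‖⁻¹ : 𝕜) • a - a‖ + ‖a - t‖ :=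
        norm_sub_le_norm_sub_add_norm_sub _ _ _
    _ ≤ 2 * ‖a - t‖ := by linarith

theorem IsCompactOperator.tendsto_comp_of_tendsto_apply {ι : Type*} {l : Filter ι}
    {Q : ι → Y →L[𝕜] Y} {C : ℝ} (hQ : ∀ i, ‖Q i‖ ≤ C)
    (hQy : ∀ y, Tendsto (fun i ↦ Q i y) l (𝓝 y)) {T : X →L[𝕜] Y} (hT : IsCompactOperator T) :
    Tendsto (fun i ↦ (Q i).comp T) l (𝓝 T) := by
  rw [Metric.tendsto_nhds]
  intro ε hε
  set r := ε / (|C| + 3) with hr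
  have hr₀ : 0 < r := by positivity
  have hrε : (|C| + 2) * r < ε := by
    rw [hr, mul_div_assoc', div_lt_iff₀ (by positivity)]
    nlinarith [abs_nonneg C]
  obtain ⟨t, -, htfin, hcover⟩ :=
    exists_finite_cover_balls_of_isCompact_closure (hT.isCompact_closure_image_closedBall 1) hr₀
  filter_upwards [(eventually_all_finite htfin).2 fun y _ ↦ Metric.tendsto_nhds.1 (hQy y) r hr₀]
    with i hi
  rw [dist_eq_norm]
  refine lt_of_le_of_lt
    (ContinuousLinearMap.opNorm_le_of_unit_norm (by positivity) fun x hx ↦ ?_) hrε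
  obtain ⟨y, hyt, hxy⟩ := Set.mem_iUnion₂.1 (hcover ⟨x, by simp [hx], rfl⟩)
  replace hxy : ‖T x - y‖ < r := by rwa [Metric.mem_ball, dist_eq_norm] at hxy
  have hQi : ‖Q i (T x - y)‖ ≤ |C| * r :=
    ((Q i).le_opNorm _).trans (mul_le_mul ((hQ i).trans (le_abs_self C)) hxy.le (norm_nonneg _)
      (abs_nonneg C))
  have hyi : ‖Q i y - y‖ < r := by simpa [dist_eq_norm] using hi y hyt
  calc ‖((Q i).comp T - T) x‖ = ‖Q i (T x - y) + (Q i y - y) - (T x - y)‖ := by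
        simp only [sub_apply, ContinuousLinearMap.comp_apply, map_sub]; abel_nf
    _ ≤ ‖Q i (T x - y)‖ + ‖Q i y - y‖ + ‖T x - y‖ := norm_sub_le_of_le (norm_add_le _ _) le_rfl
    _ ≤ (|C| + 2) * r := by linarith

theorem BPBpCompactWith.exists_of_forall_mem_submodule {η : ℝ → ℝ} {p : Submodule 𝕜 Y}
    (h : BPBpCompactWith 𝕜 X p η) (hp : IsClosed (p : Set Y)) {ε : ℝ} (hε : 0 < ε)
    {T : X →L[𝕜] Y} (hT : IsCompactOperator T) (hTp : ∀ x, T x ∈ p) (hTn : ‖T‖ = 1)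
    {x₀ : X} (hx₀ : ‖x₀‖ = 1) (hTx₀ : 1 - η ε < ‖T x₀‖) :
    ∃ S : X →L[𝕜] Y, ∃ x₁ : X, IsCompactOperator S ∧ ‖S‖ = 1 ∧ ‖x₁‖ = 1 ∧
      ‖S x₁‖ = 1 ∧ ‖x₀ - x₁‖ < ε ∧ ‖S - T‖ < ε := by
  set J := p.subtypeₗᵢ.toContinuousLinearMap
  set T' := T.codRestrict p hTp
  have hJ (R : X →L[𝕜] p) : ‖J.comp R‖ = ‖R‖ := p.subtypeₗᵢ.norm_toContinuousLinearMap_comp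
  have hT' : J.comp T' = T := rfl
  obtain ⟨S, x₁, hS, hSn, hx₁, hSx₁, hx, hST⟩ :=
    (h ε hε).2 T' (hT.codRestrict hTp hp) (by rw [← hJ, hT', hTn]) x₀ hx₀ hTx₀
  refine ⟨J.comp S, x₁, hS.clm_comp J, by rw [hJ, hSn], hx₁, hSx₁, hx, ?_⟩
  rwa [← hT', ← ContinuousLinearMap.comp_sub, hJ]

theorem IsCompactOperator.exists_norm_eq_one_range_norm_sub_lt {ι : Type*} {l : Filter ι}
    [l.NeBot] {Q : ι → Y →L[𝕜] Y} {C : ℝ} (hQ : ∀ i, ‖Q i‖ ≤ C)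
    (hQy : ∀ y, Tendsto (fun i ↦ Q i y) l (𝓝 y)) {T : X →L[𝕜] Y} (hT : IsCompactOperator T)
    (hTn : ‖T‖ = 1) {δ : ℝ} (hδ : 0 < δ) (hδ1 : δ ≤ 1) :
    ∃ i, ∃ T' : X →L[𝕜] Y, IsCompactOperator T' ∧ ‖T'‖ = 1 ∧
      (∀ x, T' x ∈ LinearMap.range (Q i : Y →ₗ[𝕜] Y)) ∧ ‖T' - T‖ < 2 * δ := by
  obtain ⟨i, hi⟩ := ((hT.tendsto_comp_of_tendsto_apply hQ hQy).eventually
    (Metric.ball_mem_nhds T hδ)).exists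
  rw [dist_eq_norm] at hi
  set A := (Q i).comp T
  have hA : A ≠ 0 := by
    rintro hA
    rw [hA, zero_sub, norm_neg, hTn] at hi
    linarith
  refine ⟨i, (‖A‖⁻¹ : 𝕜) • A, (hT.clm_comp (Q i)).smul _, norm_smul_inv_norm hA,
    fun x ↦ Submodule.smul_mem _ _ (LinearMap.mem_range_self _ (T x)),
    (norm_inv_norm_smul_sub_le hTn).trans_lt (by linarith)⟩

end

theorem bpbp_compact_of_net_of_projections_range_general {𝕜 : Type*} [RCLike 𝕜] {X Y : Type*}
    [NormedAddCommGroup X] [NormedSpace 𝕜 X]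
    [NormedAddCommGroup Y] [NormedSpace 𝕜 Y]
    {Λ : Type*} [Preorder Λ] [IsDirected Λ (· ≤ ·)] [Nonempty Λ]
    (Q : Λ → Y →L[𝕜] Y)
    (hproj : ∀ l, ∀ y : Y, Q l (Q l y) = Q l y)
    (hnorm : ∀ l, ‖Q l‖ = 1)
    (hconv : ∀ y : Y, ∀ ε : ℝ, 0 < ε → ∃ l₀ : Λ, ∀ l, l₀ ≤ l → ‖Q l y - y‖ < ε)
    (η : ℝ → ℝ)
    (hBPB : ∀ l, BPBpCompactWith 𝕜 X (↥(LinearMap.range (Q l : Y →ₗ[𝕜] Y))) η) :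
    BPBpCompact 𝕜 X Y := by
  have hQy (y : Y) : Tendsto (fun l ↦ Q l y) atTop (𝓝 y) :=
    Metric.tendsto_nhds.2 fun ε hε ↦
      eventually_atTop.2 (by simpa only [dist_eq_norm] using hconv y ε hε)
  obtain ⟨l₀⟩ := ‹Nonempty Λ›
  refine ⟨fun ε ↦ η (ε / 2) / 2, fun ε hε ↦
    ⟨half_pos (hBPB l₀ _ (half_pos hε)).1, fun T hT hTn x₀ hx₀ hTx₀ ↦ ?_⟩⟩
  beta_reduce at hTx₀
  obtain ⟨δ, hδ, hδη, hδε, hδ1⟩ : ∃ δ > 0, δ ≤ η (ε / 2) / 4 ∧ δ ≤ ε / 4 ∧ δ ≤ 1 :=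
    ⟨min (min (η (ε / 2) / 4) (ε / 4)) 1,
      lt_min (lt_min (by linarith [(hBPB l₀ _ (half_pos hε)).1]) (by linarith)) one_pos,
      (min_le_left _ _).trans (min_le_left _ _), (min_le_left _ _).trans (min_le_right _ _),
      min_le_right _ _⟩
  obtain ⟨l, T', hT', hT'n, hT'Q, hT'T⟩ :=
    hT.exists_norm_eq_one_range_norm_sub_lt (fun l ↦ (hnorm l).le) hQy hTn hδ hδ1
  have hT'x₀ : 1 - η (ε / 2) < ‖T' x₀‖ := by
    have h := norm_sub_norm_le (T x₀) (T' x₀)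
    rw [norm_sub_rev, ← sub_apply] at h
    linarith [(T' - T).unit_le_opNorm x₀ hx₀.le]
  have hQ_idem : IsIdempotentElem (Q l) := ContinuousLinearMap.ext (hproj l)
  obtain ⟨S, x₁, hS, hSn, hx₁, hSx₁, hx, hST'⟩ :=
    (hBPB l).exists_of_forall_mem_submodule
      (ContinuousLinearMap.IsIdempotentElem.isClosed_range hQ_idem) (half_pos hε) hT' hT'Q hT'n
      hx₀ hT'x₀
  refine ⟨S, x₁, hS, hSn, hx₁, hSx₁, by linarith, ?_⟩
  calc ‖S - T‖ ≤ ‖S - T'‖ + ‖T' - T‖ := norm_sub_le_norm_sub_add_norm_sub _ _ _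
    _ < ε := by linarith

/-- Proposition 2.5: a net of norm-one projections on the range space converging pointwise
in norm to the identity transfers the BPBp for compact operators from the ranges to the
whole space. -/
theorem bpbp_compact_of_net_of_projections_range {𝕜 : Type*} [RCLike 𝕜] {X Y : Type*}
    [NormedAddCommGroup X] [NormedSpace 𝕜 X] [CompleteSpace X]
    [NormedAddCommGroup Y] [NormedSpace 𝕜 Y] [CompleteSpace Y]
    {Λ : Type*} [Preorder Λ] [IsDirected Λ (· ≤ ·)] [Nonempty Λ]
    (Q : Λ → Y →L[𝕜] Y)
    (hproj : ∀ l, ∀ y : Y, Q l (Q l y) = Q l y)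
    (hnorm : ∀ l, ‖Q l‖ = 1)
    (hconv : ∀ y : Y, ∀ ε : ℝ, 0 < ε → ∃ l₀ : Λ, ∀ l, l₀ ≤ l → ‖Q l y - y‖ < ε)
    (η : ℝ → ℝ)
    (hBPB : ∀ l, BPBpCompactWith 𝕜 X (↥(LinearMap.range (Q l : Y →ₗ[𝕜] Y))) η) :
    BPBpCompact 𝕜 X Y :=
  bpbp_compact_of_net_of_projections_range_general Q hproj hnorm hconv η hBPB
end
end

section
/- Let X₁, X₂ and Y be Banach spaces and let η : (0,∞) → (0,∞) be a function. If the pair (X₁ ⊕₁ X₂, Y) has the BPBp for compact operators with the function η, then both pairs (X₁, Y) and (X₂, Y) have the BPBp for compact operators with the same function η. Likewise, if the pair (X₁ ⊕_∞ X₂, Y) has the BPBp for compact operators with the function η, then both pairs (X₁, Y) and (X₂, Y) have the BPBp for compact operators with the same function η. -/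
open MeasureTheory

noncomputable section

/-!
Let `P` be the projection of the sum onto `X₁` and `ι` the inclusion. A compact `T` on `X₁`
nearly attaining its norm at `x₀` lifts to `T ∘ P`, nearly attaining its norm at `ι x₀`; the
property of the sum gives `S'` and `z` close to them. For every right inverse `J` of `P` with
`‖J‖ ≤ 1` we have `‖S' ∘ J - T‖ ≤ ‖S' - T ∘ P‖`, so it suffices to choose `J` and a unit
vector `x₁` near `x₀` with `‖S' (J x₁)‖ = 1`.

In the `ℓ¹` case `J = ι` and `x₁` is the normalised first coordinate of `z`: since
`‖z‖ = ‖z₁‖ + ‖z₂‖` and `‖S' z‖ = 1`, we get `‖S' (ι z₁)‖ ≥ ‖z₁‖`. This coordinate is nonzero once `ε ≤ 2`,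
and for `ε > 2` a rank-one operator attaining its norm at `x₀` will do.
In the `ℓ^∞` case `J x = (x, φ x • z₂)` with `φ` norming `x₁`. Either `‖z₁‖ = 1` and `x₁ = z₁`,
so that `J x₁ = z`; or `‖z₁‖ < 1`, then a functional norming `S' z` is flat along `X₁` near `z`,
hence vanishes on `S' ∘ ι`, and `x₁ = x₀` works. The second summand is the first one after
swapping the summands.
-/

open ContinuousLinearMap WithLp

section

variable {𝕜 : Type*} [RCLike 𝕜] {X Y Z : Type*}
  [NormedAddCommGroup X] [NormedSpace 𝕜 X] [NormedAddCommGroup Y] [NormedSpace 𝕜 Y]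
  [NormedAddCommGroup Z] [NormedSpace 𝕜 Z]

theorem isCompactOperator_smulRight (φ : StrongDual 𝕜 X) (y : Y) :
    IsCompactOperator (φ.smulRight y) :=
  (isCompactOperator_of_locallyCompactSpace_dom φ).clm_comp (toSpanSingleton 𝕜 y)

theorem exists_isCompactOperator_norm_eq_one_apply_eq {x : X} (hx : ‖x‖ = 1) {y : Y}
    (hy : ‖y‖ = 1) : ∃ S : X →L[𝕜] Y, IsCompactOperator S ∧ ‖S‖ = 1 ∧ S x = y := by
  obtain ⟨φ, hφ, hφx⟩ := exists_dual_vector 𝕜 x (by simp [hx])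
  refine ⟨φ.smulRight y, isCompactOperator_smulRight φ y, ?_, ?_⟩
  · rw [norm_smulRight_apply, hφ, hy, one_mul]
  · simp [hφx, hx]

theorem StrongDual.eq_zero_of_norm_one_add_le {g : StrongDual 𝕜 X} {r : ℝ} (hr : 0 < r)
    (h : ∀ v, ‖v‖ < r → ‖1 + g v‖ ≤ 1) : g = 0 := by
  refine norm_le_zero_iff.mp (opNorm_le_of_ball hr le_rfl fun v hv => ?_)
  rw [mem_ball_zero_iff] at hv
  have hplus := h v hv
  have hminus : ‖1 - g v‖ ≤ 1 := by simpa [sub_eq_add_neg] using h (-v) (by rwa [norm_neg])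
  -- parallelogram law: `‖1 + w‖² + ‖1 - w‖² = 2 + 2 ‖w‖²`
  have hpar := parallelogram_law_with_norm 𝕜 (1 : 𝕜) (g v)
  rw [norm_one] at hpar
  rw [zero_mul]
  nlinarith [norm_nonneg (1 + g v), norm_nonneg (1 - g v), norm_nonneg (g v)]

theorem norm_sub_inv_norm_smul_self {x : X} (hx : x ≠ 0) :
    ‖x - (‖x‖⁻¹ : 𝕜) • x‖ = |‖x‖ - 1| := by
  have hpos : 0 < ‖x‖ := norm_pos_iff.mpr hx
  calc ‖x - (‖x‖⁻¹ : 𝕜) • x‖ = ‖((1 - ‖x‖⁻¹ : ℝ) : 𝕜) • x‖ := by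
        rw [RCLike.ofReal_sub, RCLike.ofReal_one, sub_smul, one_smul, RCLike.ofReal_inv]
    _ = |(1 - ‖x‖⁻¹) * ‖x‖| := by rw [norm_smul, RCLike.norm_ofReal, abs_mul, abs_norm]
    _ = |‖x‖ - 1| := by rw [sub_mul, one_mul, inv_mul_cancel₀ hpos.ne', ← abs_neg, neg_sub]

section Retract

variable {P : Z →L[𝕜] X} {ι : X →L[𝕜] Z}

theorem norm_apply_eq_of_comp_eq_id (hP : ‖P‖ ≤ 1) (hι : ‖ι‖ ≤ 1) (hPι : P.comp ι = .id 𝕜 X)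
    (x : X) : ‖ι x‖ = ‖x‖ := by
  refine le_antisymm (ι.le_of_opNorm_le hι x |>.trans_eq (one_mul _)) ?_
  calc ‖x‖ = ‖P (ι x)‖ := by rw [← comp_apply, hPι, id_apply]
    _ ≤ ‖ι x‖ := P.le_of_opNorm_le hP _ |>.trans_eq (one_mul _)

theorem norm_comp_eq_of_comp_eq_id (hP : ‖P‖ ≤ 1) (hι : ‖ι‖ ≤ 1) (hPι : P.comp ι = .id 𝕜 X)
    (T : X →L[𝕜] Y) : ‖T.comp P‖ = ‖T‖ := by
  refine le_antisymm ((opNorm_comp_le T P).trans (mul_le_of_le_one_right (norm_nonneg T) hP)) ?_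
  calc ‖T‖ = ‖(T.comp P).comp ι‖ := by rw [comp_assoc, hPι, comp_id]
    _ ≤ ‖T.comp P‖ := (opNorm_comp_le _ ι).trans (mul_le_of_le_one_right (norm_nonneg _) hι)

theorem norm_comp_sub_le_of_comp_eq_id {J : X →L[𝕜] Z} (hJ : ‖J‖ ≤ 1)
    (hPJ : P.comp J = .id 𝕜 X) (S : Z →L[𝕜] Y) (T : X →L[𝕜] Y) :
    ‖S.comp J - T‖ ≤ ‖S - T.comp P‖ := by
  calc ‖S.comp J - T‖ = ‖(S - T.comp P).comp J‖ := by rw [sub_comp, comp_assoc, hPJ, comp_id]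
    _ ≤ ‖S - T.comp P‖ := (opNorm_comp_le _ J).trans (mul_le_of_le_one_right (norm_nonneg _) hJ)

end Retract

theorem BPBpCompactWith.of_retract {η : ℝ → ℝ} (H : BPBpCompactWith 𝕜 Z Y η)
    (P : Z →L[𝕜] X) (ι : X →L[𝕜] Z) (hP : ‖P‖ ≤ 1) (hι : ‖ι‖ ≤ 1) (hPι : P.comp ι = .id 𝕜 X)
    (hlift : ∀ ε ≤ 2, ∀ (S : Z →L[𝕜] Y) (z : Z) (x₀ : X), ‖S‖ = 1 → ‖z‖ = 1 → ‖S z‖ = 1 →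
      ‖x₀‖ = 1 → ‖ι x₀ - z‖ < ε → ∃ J : X →L[𝕜] Z, ∃ x₁ : X,
        ‖J‖ ≤ 1 ∧ P.comp J = .id 𝕜 X ∧ ‖x₁‖ = 1 ∧ ‖S (J x₁)‖ = 1 ∧ ‖x₀ - x₁‖ < ε) :
    BPBpCompactWith 𝕜 X Y η := by
  intro ε hε
  obtain ⟨hη, H⟩ := H ε hε
  refine ⟨hη, fun T hTc hT x₀ hx₀ hTx₀ => ?_⟩
  have hPιx₀ : P (ι x₀) = x₀ := by rw [← comp_apply, hPι, id_apply]
  obtain ⟨S', z, hS'c, hS', hz, hS'z, hdist, hS'T⟩ :=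
    H (T.comp P) (hTc.comp_clm P) (by rw [norm_comp_eq_of_comp_eq_id hP hι hPι, hT]) (ι x₀)
      (by rw [norm_apply_eq_of_comp_eq_id hP hι hPι, hx₀]) (by rwa [comp_apply, hPιx₀])
  rcases le_or_gt ε 2 with hε2 | hε2
  · obtain ⟨J, x₁, hJ, hPJ, hx₁, hS'Jx₁, hx₀x₁⟩ := hlift ε hε2 S' z x₀ hS' hz hS'z hx₀ hdist
    have hS'J : ‖S'.comp J‖ = 1 := by
      refine le_antisymm ((opNorm_comp_le S' J).trans (by rw [hS']; simpa using hJ)) ?_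
      simpa [hS'Jx₁, hx₁] using (S'.comp J).le_opNorm x₁
    exact ⟨S'.comp J, x₁, hS'c.comp_clm J, hS'J, hx₁, hS'Jx₁, hx₀x₁,
      (norm_comp_sub_le_of_comp_eq_id hJ hPJ S' T).trans_lt hS'T⟩
  · obtain ⟨S, hSc, hS, hSx₀⟩ := exists_isCompactOperator_norm_eq_one_apply_eq (𝕜 := 𝕜) hx₀ hS'z
    refine ⟨S, x₀, hSc, hS, hx₀, by rw [hSx₀, hS'z], by simpa using hε, ?_⟩
    calc ‖S - T‖ ≤ ‖S‖ + ‖T‖ := norm_sub_le S T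
      _ < ε := by rw [hS, hT]; linarith

theorem BPBpCompactWith.of_linearIsometryEquiv {η : ℝ → ℝ} (H : BPBpCompactWith 𝕜 Z Y η)
    (e : X ≃ₗᵢ[𝕜] Z) : BPBpCompactWith 𝕜 X Y η := by
  have he : ‖(e : X →L[𝕜] Z)‖ ≤ 1 := e.toLinearIsometry.norm_toContinuousLinearMap_le
  have he_symm : ‖(e.symm : Z →L[𝕜] X)‖ ≤ 1 :=
    e.symm.toLinearIsometry.norm_toContinuousLinearMap_le
  have hcomp : (e.symm : Z →L[𝕜] X).comp (e : X →L[𝕜] Z) = .id 𝕜 X := by ext; simp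
  refine H.of_retract e.symm e he_symm he hcomp fun ε _ S z x₀ _ hz hSz _ hdist => ?_
  refine ⟨e, e.symm z, he, hcomp, by simpa using hz, by simpa using hSz, ?_⟩
  rwa [← e.symm_apply_apply x₀, ← map_sub, LinearIsometryEquiv.norm_map]

section Prod

variable {X₁ X₂ : Type*} [NormedAddCommGroup X₁] [NormedSpace 𝕜 X₁]
  [NormedAddCommGroup X₂] [NormedSpace 𝕜 X₂]

namespace WithLp

variable {p : ENNReal}

variable (p) in
def prodL (f : X →L[𝕜] X₁) (g : X →L[𝕜] X₂) : X →L[𝕜] WithLp p (X₁ × X₂) :=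
  (prodContinuousLinearEquiv p 𝕜 X₁ X₂).symm.toContinuousLinearMap.comp (f.prod g)

@[simp]
theorem prodL_apply (f : X →L[𝕜] X₁) (g : X →L[𝕜] X₂) (x : X) :
    prodL p f g x = toLp p (f x, g x) := rfl

theorem fstL_comp_prodL (f : X →L[𝕜] X₁) (g : X →L[𝕜] X₂) :
    (fstL p 𝕜 X₁ X₂).comp (prodL p f g) = f := rfl

theorem norm_fstL_le [Fact (1 ≤ p)] : ‖fstL p 𝕜 X₁ X₂‖ ≤ 1 :=
  opNorm_le_bound _ zero_le_one fun z => by simpa using norm_fst_le (x := z)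

theorem norm_prodL_id_zero_le [Fact (1 ≤ p)] : ‖prodL p (.id 𝕜 X₁) (0 : X₁ →L[𝕜] X₂)‖ ≤ 1 :=
  opNorm_le_bound _ zero_le_one fun x => by simp

theorem norm_prodL_top_le (f : X →L[𝕜] X₁) (g : X →L[𝕜] X₂) :
    ‖prodL ⊤ f g‖ ≤ max ‖f‖ ‖g‖ := by
  refine opNorm_le_bound _ (le_max_of_le_left (norm_nonneg f)) fun x => ?_
  rw [prodL_apply, prod_norm_toLp]
  exact ((f.prod g).le_opNorm x).trans_eq (by rw [opNorm_prod, Prod.norm_mk])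

end WithLp

theorem exists_norm_apply_toLp_fst_eq_one_of_L1 {S : WithLp 1 (X₁ × X₂) →L[𝕜] Y}
    (hS : ‖S‖ ≤ 1) {z : WithLp 1 (X₁ × X₂)} (hz : ‖z‖ = 1) (hSz : ‖S z‖ = 1) {x₀ : X₁}
    (hx₀ : ‖x₀‖ = 1) {ε : ℝ} (hε : ε ≤ 2) (hdist : ‖toLp 1 (x₀, 0) - z‖ < ε) :
    ∃ x₁ : X₁, ‖x₁‖ = 1 ∧ ‖S (toLp 1 (x₁, 0))‖ = 1 ∧ ‖x₀ - x₁‖ < ε := by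
  set a := z.fst
  set b := z.snd
  have hab : ‖a‖ + ‖b‖ = 1 := by rw [← prod_norm_eq_of_L1, hz]
  have hdist' : ‖x₀ - a‖ + ‖b‖ < ε := by simpa [prod_norm_eq_of_L1, a, b] using hdist
  have ha : a ≠ 0 := by
    rintro ha
    rw [ha, norm_zero, zero_add] at hab
    rw [ha, sub_zero, hx₀, hab] at hdist'
    linarith
  have hSa : ‖a‖ ≤ ‖S (toLp 1 (a, 0))‖ := by
    have hsplit : z = toLp 1 (a, 0) + toLp 1 (0, b) := by
      rw [← toLp_add, Prod.mk_add_mk, add_zero, zero_add]; rfl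
    have hSb : ‖S (toLp 1 ((0 : X₁), b))‖ ≤ ‖b‖ := by
      simpa using S.le_of_opNorm_le hS (toLp 1 ((0 : X₁), b))
    have : 1 ≤ ‖S (toLp 1 (a, 0))‖ + ‖S (toLp 1 ((0 : X₁), b))‖ := by
      rw [← hSz, hsplit, map_add]; exact norm_add_le _ _
    linarith
  refine ⟨(‖a‖⁻¹ : 𝕜) • a, norm_smul_inv_norm ha, le_antisymm ?_ ?_, ?_⟩
  · simpa [norm_smul_inv_norm ha] using S.le_of_opNorm_le hS (toLp 1 ((‖a‖⁻¹ : 𝕜) • a, 0))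
  · have hsmul : toLp 1 ((‖a‖⁻¹ : 𝕜) • a, (0 : X₂)) = (‖a‖⁻¹ : 𝕜) • toLp 1 (a, 0) := by
      rw [← toLp_smul, Prod.smul_mk, smul_zero]
    rw [hsmul, map_smul, norm_smul, norm_inv, RCLike.norm_ofReal, abs_norm]
    exact (le_inv_mul_iff₀ (norm_pos_iff.mpr ha)).mpr (by rwa [mul_one])
  · calc ‖x₀ - (‖a‖⁻¹ : 𝕜) • a‖ ≤ ‖x₀ - a‖ + ‖a - (‖a‖⁻¹ : 𝕜) • a‖ :=
          norm_sub_le_norm_sub_add_norm_sub _ _ _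
      _ = ‖x₀ - a‖ + ‖b‖ := by
        rw [norm_sub_inv_norm_smul_self ha, abs_of_nonpos (by linarith [norm_nonneg b])]
        linarith
      _ < ε := hdist'

theorem BPBpCompactWith.of_L1_prod_left {η : ℝ → ℝ}
    (H : BPBpCompactWith 𝕜 (WithLp 1 (X₁ × X₂)) Y η) : BPBpCompactWith 𝕜 X₁ Y η := by
  refine H.of_retract (fstL 1 𝕜 X₁ X₂) (prodL 1 (.id 𝕜 X₁) 0) norm_fstL_le
    norm_prodL_id_zero_le (fstL_comp_prodL _ _) fun ε hε S z x₀ hS hz hSz hx₀ hdist => ?_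
  obtain ⟨x₁, hx₁, hSx₁, hx₀x₁⟩ :=
    exists_norm_apply_toLp_fst_eq_one_of_L1 hS.le hz hSz hx₀ hε (by simpa using hdist)
  exact ⟨prodL 1 (.id 𝕜 X₁) 0, x₁, norm_prodL_id_zero_le, fstL_comp_prodL _ _, hx₁,
    by simpa using hSx₁, hx₀x₁⟩

theorem apply_toLp_fst_eq_zero_of_Linfty {f : StrongDual 𝕜 (WithLp ⊤ (X₁ × X₂))}
    (hf : ‖f‖ ≤ 1) {z : WithLp ⊤ (X₁ × X₂)} (hfz : f z = 1) (hz₁ : ‖z.fst‖ < 1)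
    (hz₂ : ‖z.snd‖ ≤ 1) (x : X₁) : f (toLp ⊤ (x, 0)) = 0 := by
  suffices hflat : f.comp (prodL ⊤ (.id 𝕜 X₁) 0) = 0 by simpa using congr($hflat x)
  refine StrongDual.eq_zero_of_norm_one_add_le (r := 1 - ‖z.fst‖) (by linarith) fun v hv => ?_
  have hzv : ‖z + toLp ⊤ (v, 0)‖ ≤ 1 := by
    rw [prod_norm_eq_sup]
    exact sup_le (by simpa using (norm_add_le _ _).trans (by linarith)) (by simpa using hz₂)
  calc ‖1 + f.comp (prodL ⊤ (.id 𝕜 X₁) 0) v‖ = ‖f (z + toLp ⊤ (v, 0))‖ := by simp [hfz]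
    _ ≤ 1 := (f.le_of_opNorm_le hf _).trans (by simpa using hzv)

theorem exists_norm_apply_toLp_eq_one_of_Linfty {S : WithLp ⊤ (X₁ × X₂) →L[𝕜] Y}
    (hS : ‖S‖ ≤ 1) {z : WithLp ⊤ (X₁ × X₂)} (hz : ‖z‖ ≤ 1) (hSz : ‖S z‖ = 1) {x₀ : X₁}
    (hx₀ : ‖x₀‖ = 1) {ε : ℝ} (hdist : ‖toLp ⊤ (x₀, 0) - z‖ < ε) :
    ∃ φ : StrongDual 𝕜 X₁, ∃ x₁ : X₁, ‖φ‖ ≤ 1 ∧ ‖x₁‖ = 1 ∧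
      ‖S (toLp ⊤ (x₁, φ x₁ • z.snd))‖ = 1 ∧ ‖x₀ - x₁‖ < ε := by
  set a := z.fst
  set b := z.snd
  have ha : ‖a‖ ≤ 1 := (WithLp.norm_fst_le (x := z)).trans hz
  have hb : ‖b‖ ≤ 1 := (WithLp.norm_snd_le (x := z)).trans hz
  have hx₀a : ‖x₀ - a‖ < ε := by
    simpa [a] using (WithLp.norm_fst_le (x := toLp ⊤ (x₀, 0) - z)).trans_lt hdist
  obtain ⟨ξ, hξ, hξSz⟩ := exists_dual_vector 𝕜 (S z) (by simp [hSz])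
  rw [hSz, RCLike.ofReal_one] at hξSz
  obtain ⟨x₁, hx₁, hx₀x₁, hξx₁⟩ : ∃ x₁ : X₁, ‖x₁‖ = 1 ∧ ‖x₀ - x₁‖ < ε ∧
      ξ (S (toLp ⊤ (x₁ - a, 0))) = 0 := by
    rcases ha.eq_or_lt with ha1 | ha1
    · exact ⟨a, ha1, hx₀a, by rw [sub_self, Prod.mk_zero_zero, toLp_zero, map_zero, map_zero]⟩
    · exact ⟨x₀, hx₀, by simpa using (norm_nonneg _).trans_lt hdist,
        apply_toLp_fst_eq_zero_of_Linfty (f := ξ.comp S) ((opNorm_comp_le ξ S).trans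
          (by rw [hξ, one_mul]; exact hS)) hξSz ha1 hb _⟩
  obtain ⟨φ, hφ, hφx₁⟩ := exists_dual_vector 𝕜 x₁ (by simp [hx₁])
  have hsplit : toLp ⊤ (x₁, φ x₁ • b) = z + toLp ⊤ (x₁ - a, 0) := by
    rw [hφx₁, hx₁, RCLike.ofReal_one, one_smul, show z = toLp ⊤ (a, b) from rfl, ← toLp_add,
      Prod.mk_add_mk, add_sub_cancel, add_zero]
  refine ⟨φ, x₁, hφ.le, hx₁, le_antisymm ?_ ?_, hx₀x₁⟩
  · refine (S.le_of_opNorm_le hS _).trans ?_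
    rw [one_mul, prod_norm_eq_sup]
    simp [hφx₁, hx₁, hb]
  · calc (1 : ℝ) = ‖ξ (S (toLp ⊤ (x₁, φ x₁ • b)))‖ := by
          rw [hsplit, map_add, map_add, hξSz, hξx₁, add_zero, norm_one]
      _ ≤ ‖S (toLp ⊤ (x₁, φ x₁ • b))‖ := ξ.le_of_opNorm_le hξ.le _ |>.trans_eq (one_mul _)

theorem BPBpCompactWith.of_Linfty_prod_left {η : ℝ → ℝ}
    (H : BPBpCompactWith 𝕜 (WithLp ⊤ (X₁ × X₂)) Y η) : BPBpCompactWith 𝕜 X₁ Y η := by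
  refine H.of_retract (fstL ⊤ 𝕜 X₁ X₂) (prodL ⊤ (.id 𝕜 X₁) 0) norm_fstL_le
    norm_prodL_id_zero_le (fstL_comp_prodL _ _) fun ε _ S z x₀ hS hz hSz hx₀ hdist => ?_
  obtain ⟨φ, x₁, hφ, hx₁, hSx₁, hx₀x₁⟩ :=
    exists_norm_apply_toLp_eq_one_of_Linfty hS.le hz.le hSz hx₀ (by simpa using hdist)
  have hJ : ‖prodL ⊤ (.id 𝕜 X₁) (φ.smulRight z.snd)‖ ≤ 1 := by
    refine (norm_prodL_top_le _ _).trans (max_le norm_id_le ?_)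
    rw [norm_smulRight_apply]
    exact mul_le_one₀ hφ (norm_nonneg _) ((WithLp.norm_snd_le (x := z)).trans hz.le)
  exact ⟨prodL ⊤ (.id 𝕜 X₁) (φ.smulRight z.snd), x₁, hJ, fstL_comp_prodL _ _, hx₁,
    by simpa using hSx₁, hx₀x₁⟩

end Prod

end

theorem bpbp_compact_of_sum_domain_general {𝕜 : Type*} [RCLike 𝕜] {X₁ X₂ Y : Type*}
    [NormedAddCommGroup X₁] [NormedSpace 𝕜 X₁]
    [NormedAddCommGroup X₂] [NormedSpace 𝕜 X₂]
    [NormedAddCommGroup Y] [NormedSpace 𝕜 Y]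
    (η : ℝ → ℝ) :
    (BPBpCompactWith 𝕜 (WithLp 1 (X₁ × X₂)) Y η →
      BPBpCompactWith 𝕜 X₁ Y η ∧ BPBpCompactWith 𝕜 X₂ Y η) ∧
    (BPBpCompactWith 𝕜 (WithLp ⊤ (X₁ × X₂)) Y η →
      BPBpCompactWith 𝕜 X₁ Y η ∧ BPBpCompactWith 𝕜 X₂ Y η) :=
  ⟨fun H => ⟨H.of_L1_prod_left,
      (H.of_linearIsometryEquiv (LinearIsometryEquiv.withLpProdComm 1 𝕜 X₂ X₁)).of_L1_prod_left⟩,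
    fun H => ⟨H.of_Linfty_prod_left,
      (H.of_linearIsometryEquiv (LinearIsometryEquiv.withLpProdComm ⊤ 𝕜 X₂ X₁)).of_Linfty_prod_left⟩⟩

/-- Lemma 2.6 (a): the BPBp for compact operators with function η passes from
(X₁ ⊕₁ X₂, Y) and from (X₁ ⊕∞ X₂, Y) to (X₁, Y) and (X₂, Y). -/
theorem bpbp_compact_of_sum_domain {𝕜 : Type*} [RCLike 𝕜] {X₁ X₂ Y : Type*}
    [NormedAddCommGroup X₁] [NormedSpace 𝕜 X₁] [CompleteSpace X₁]
    [NormedAddCommGroup X₂] [NormedSpace 𝕜 X₂] [CompleteSpace X₂]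
    [NormedAddCommGroup Y] [NormedSpace 𝕜 Y] [CompleteSpace Y]
    (η : ℝ → ℝ) :
    (BPBpCompactWith 𝕜 (WithLp 1 (X₁ × X₂)) Y η →
      BPBpCompactWith 𝕜 X₁ Y η ∧ BPBpCompactWith 𝕜 X₂ Y η) ∧
    (BPBpCompactWith 𝕜 (WithLp ⊤ (X₁ × X₂)) Y η →
      BPBpCompactWith 𝕜 X₁ Y η ∧ BPBpCompactWith 𝕜 X₂ Y η) :=
  bpbp_compact_of_sum_domain_general η
end
end
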